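/- arXiv:1901.07609 — 2 statements merged into one kernel-verified Lean document; each statement's English description precedes it below -/
import Mathlib

section
/- Let X be a vertex cover of H_v and let Twins(v) be the set consisting of v and all its twins. Then there exists a minimum-size cluster deletion set S of G such that either v ∉ S or |X \ S| ≥ 1 + |Twins(v)|. -/
def IsClusterGraph {W : Type*} (H : SimpleGraph W) : Prop :=
  ∀ u w : W, H.Reachable u w → u ≠ w → H.Adj u w

def IsCDS {V : Type*} (G : SimpleGraph V) (S : Set V) : Prop :=
  IsClusterGraph (G.induce {x | x ∉ S})

def IsVC {V : Type*} (H : SimpleGraph V) (X : Set V) : Prop :=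
  ∀ u w : V, H.Adj u w → u ∈ X ∨ w ∈ X

/-- The auxiliary graph `H_v`: vertices of `V` carry it, but all edges lie inside
`N(v) ∪ N²(v)`. Between `N(v)` and `N²(v)` it has the edges of `G`; inside `N(v)`
it has the non-edges of `G`; `N²(v)` is independent. -/
def Hv {V : Type*} (G : SimpleGraph V) (v : V) : SimpleGraph V :=
  SimpleGraph.fromRel (fun u u' =>
    (G.Adj v u ∧ G.Adj v u' ∧ ¬ G.Adj u u') ∨
    (G.Adj v u ∧ G.dist v u' = 2 ∧ G.Adj u u'))

/-- `v` together with all its twins (vertices with the same closed neighborhood). -/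
def Twins {V : Type*} (G : SimpleGraph V) (v : V) : Set V :=
  {v' | insert v' (G.neighborSet v') = insert v (G.neighborSet v)}

/-- Delete a vertex `u` from `H` (keeping it as an isolated vertex). -/
def delVert {V : Type*} (H : SimpleGraph V) (u : V) : SimpleGraph V :=
  SimpleGraph.fromRel (fun a b => H.Adj a b ∧ a ≠ u ∧ b ≠ u)


/-!
Take a minimum cluster deletion set `S` containing `v`. If a twin `v'` of `v` avoids `S`,
exchanging `v` and `v'` is an automorphism of `G` carrying `S` to a minimum solution avoiding `v`.
Otherwise `Twins(v) ⊆ S`, and if `|X \ S| ≤ |Twins(v)|` then `(S ∪ X) \ Twins(v)` is again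
minimum and avoids `v`. Outside it, `N[v]` keeps only twins of `v` and vertices of `N(v) \ X`;
these form a clique because non-edges inside `N(v)` are edges of `H_v`, and they have no
surviving neighbours beyond `N[v]` because edges from `N(v)` to `N²(v)` are edges of `H_v`.
Away from `N[v]` the deletion set only grew.
-/

namespace SimpleGraph

variable {V : Type*} {G : SimpleGraph V} {v v' a b c : V}

def closedNbhd (G : SimpleGraph V) (v : V) : Set V := insert v (G.neighborSet v)

lemma mem_closedNbhd : a ∈ G.closedNbhd v ↔ a = v ∨ G.Adj v a := Iff.rfl

lemma mem_twins_iff : v' ∈ Twins G v ↔ G.closedNbhd v' = G.closedNbhd v := Iff.rfl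

lemma mem_twins_self : v ∈ Twins G v := rfl

lemma mem_closedNbhd_of_mem_twins (h : v' ∈ Twins G v) : v' ∈ G.closedNbhd v :=
  mem_twins_iff.mp h ▸ Set.mem_insert v' _

lemma mem_closedNbhd_of_mem_twins_of_adj (ha : a ∈ Twins G v) (hac : G.Adj a c) :
    c ∈ G.closedNbhd v :=
  mem_twins_iff.mp ha ▸ Or.inr hac

lemma adj_of_mem_twins_of_mem_closedNbhd (ha : a ∈ Twins G v) (hb : b ∈ G.closedNbhd v)
    (hab : a ≠ b) : G.Adj a b := by
  rw [← mem_twins_iff.mp ha, mem_closedNbhd] at hb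
  exact hb.resolve_left hab.symm

lemma adj_swap_of_mem_twins [DecidableEq V] (h : v' ∈ Twins G v) (hab : G.Adj a b) :
    G.Adj (Equiv.swap v v' a) (Equiv.swap v v' b) := by
  rw [mem_twins_iff, Set.ext_iff] at h
  simp only [mem_closedNbhd] at h
  have := h a
  have := h b
  simp only [Equiv.swap_apply_def]
  split_ifs <;> grind [G.adj_symm, G.ne_of_adj]

def twinSwap [DecidableEq V] (h : v' ∈ Twins G v) : G ≃g G where
  toEquiv := Equiv.swap v v'
  map_rel_iff' {a b} := ⟨fun hab => by simpa using adj_swap_of_mem_twins h hab,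
    adj_swap_of_mem_twins h⟩

lemma adj_of_walk_of_forall_adj_adj
    (htr : ∀ a b c : V, G.Adj a b → G.Adj b c → a ≠ c → G.Adj a c) :
    ∀ {u w : V}, G.Walk u w → u ≠ w → G.Adj u w
  | _, _, .nil, h => absurd rfl h
  | _, w, .cons (v := x) hux p, hne => by
    obtain rfl | hxw := eq_or_ne x w
    · exact hux
    · exact htr _ _ _ hux (adj_of_walk_of_forall_adj_adj htr p hxw) hne

lemma dist_eq_two_of_adj_of_notMem_closedNbhd (hva : G.Adj v a) (hac : G.Adj a c)
    (hc : c ∉ G.closedNbhd v) : G.dist v c = 2 := by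
  rw [mem_closedNbhd, not_or] at hc
  have hle : G.dist v c ≤ 2 := dist_le (.cons hva (.cons hac .nil))
  have hpos : 0 < G.dist v c := (hva.reachable.trans hac.reachable).pos_dist_of_ne (Ne.symm hc.1)
  have hne : G.dist v c ≠ 1 := fun h => hc.2 (dist_eq_one_iff_adj.mp h)
  omega

end SimpleGraph

open SimpleGraph

section

variable {V : Type*} {G : SimpleGraph V} {v a b c : V} {S X : Set V}

lemma isCDS_iff : IsCDS G S ↔ ∀ a b c, a ∉ S → b ∉ S → c ∉ S →
    G.Adj a b → G.Adj b c → a ≠ c → G.Adj a c := by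
  constructor
  · intro h a b c ha hb hc hab hbc hac
    have hab' : (G.induce {x | x ∉ S}).Adj ⟨a, ha⟩ ⟨b, hb⟩ := hab
    have hbc' : (G.induce {x | x ∉ S}).Adj ⟨b, hb⟩ ⟨c, hc⟩ := hbc
    exact h _ _ (hab'.reachable.trans hbc'.reachable) (by simpa using hac)
  · rintro h u w ⟨p⟩ hne
    refine adj_of_walk_of_forall_adj_adj (fun a b c hab hbc hac => ?_) p hne
    exact h a b c a.2 b.2 c.2 hab hbc (Subtype.coe_ne_coe.mpr hac)

lemma isCDS_univ : IsCDS G Set.univ := fun u _ _ _ => absurd trivial u.2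

lemma exists_isCDS_forall_ncard_le (G : SimpleGraph V) :
    ∃ S, IsCDS G S ∧ ∀ T, IsCDS G T → S.ncard ≤ T.ncard := by
  obtain ⟨S, hS, hmin⟩ :=
    (InvImage.wf Set.ncard wellFounded_lt).has_min {S | IsCDS G S} ⟨_, isCDS_univ⟩
  exact ⟨S, hS, fun T hT => not_lt.mp (hmin T hT)⟩

lemma IsCDS.preimage (f : G ≃g G) (hS : IsCDS G S) : IsCDS G (f ⁻¹' S) := by
  rw [isCDS_iff] at hS ⊢
  intro a b c ha hb hc hab hbc hac
  exact f.map_adj_iff.mp <|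
    hS _ _ _ ha hb hc (f.map_adj_iff.mpr hab) (f.map_adj_iff.mpr hbc) (f.injective.ne hac)

lemma hv_adj_of_not_adj (hva : G.Adj v a) (hvb : G.Adj v b) (hab : a ≠ b)
    (hnadj : ¬ G.Adj a b) : (Hv G v).Adj a b :=
  (fromRel_adj _ _ _).mpr ⟨hab, .inl (.inl ⟨hva, hvb, hnadj⟩)⟩

lemma hv_adj_of_dist_eq_two (hva : G.Adj v a) (hvc : G.dist v c = 2) (hac : G.Adj a c) :
    (Hv G v).Adj a c :=
  (fromRel_adj _ _ _).mpr ⟨hac.ne, .inl (.inr ⟨hva, hvc, hac⟩)⟩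

lemma IsVC.adj_of_notMem (hX : IsVC (Hv G v) X) (hva : G.Adj v a) (hvb : G.Adj v b)
    (ha : a ∉ X) (hb : b ∉ X) (hab : a ≠ b) : G.Adj a b := by
  by_contra hnadj
  exact (hX a b (hv_adj_of_not_adj hva hvb hab hnadj)).elim ha hb

lemma IsVC.mem_closedNbhd_of_adj_of_notMem (hX : IsVC (Hv G v) X) (hva : G.Adj v a) (ha : a ∉ X)
    (hc : c ∉ X) (hac : G.Adj a c) : c ∈ G.closedNbhd v := by
  by_contra hcv
  have hvc := dist_eq_two_of_adj_of_notMem_closedNbhd hva hac hcv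
  exact (hX a c (hv_adj_of_dist_eq_two hva hvc hac)).elim ha hc

lemma mem_twins_or_of_mem_closedNbhd (haN : a ∈ G.closedNbhd v) (ha : a ∈ Twins G v ∪ Xᶜ) :
    a ∈ Twins G v ∨ (G.Adj v a ∧ a ∉ X) := by
  rcases ha with haT | haX
  · exact .inl haT
  rcases haN with rfl | hva
  · exact .inl mem_twins_self
  · exact .inr ⟨hva, haX⟩

lemma IsVC.isClique_closedNbhd_inter (hX : IsVC (Hv G v) X) :
    G.IsClique (G.closedNbhd v ∩ (Twins G v ∪ Xᶜ)) := by
  rintro a ⟨haN, ha⟩ b ⟨hbN, hb⟩ hab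
  rcases mem_twins_or_of_mem_closedNbhd haN ha with haT | ⟨hva, haX⟩
  · exact adj_of_mem_twins_of_mem_closedNbhd haT hbN hab
  rcases mem_twins_or_of_mem_closedNbhd hbN hb with hbT | ⟨hvb, hbX⟩
  · exact (adj_of_mem_twins_of_mem_closedNbhd hbT haN hab.symm).symm
  · exact hX.adj_of_notMem hva hvb haX hbX hab

lemma IsVC.mem_closedNbhd_of_adj (hX : IsVC (Hv G v) X) (haN : a ∈ G.closedNbhd v)
    (ha : a ∈ Twins G v ∪ Xᶜ) (hc : c ∈ Twins G v ∪ Xᶜ) (hac : G.Adj a c) :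
    c ∈ G.closedNbhd v := by
  rcases mem_twins_or_of_mem_closedNbhd haN ha with haT | ⟨hva, haX⟩
  · exact mem_closedNbhd_of_mem_twins_of_adj haT hac
  rcases hc with hcT | hcX
  · exact mem_closedNbhd_of_mem_twins hcT
  · exact hX.mem_closedNbhd_of_adj_of_notMem hva haX hcX hac

lemma IsCDS.union_diff_twins (hS : IsCDS G S) (hX : IsVC (Hv G v) X) :
    IsCDS G ((S ∪ X) \ Twins G v) := by
  have hout : ∀ {a}, a ∉ (S ∪ X) \ Twins G v → a ∈ Twins G v ∨ a ∉ S ∧ a ∉ X := by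
    intro a ha
    simp only [Set.mem_sdiff, Set.mem_union, not_and, not_not] at ha
    tauto
  have hTX : ∀ {a}, a ∉ (S ∪ X) \ Twins G v → a ∈ Twins G v ∪ Xᶜ := fun ha =>
    (hout ha).imp_right (·.2)
  rw [isCDS_iff] at hS ⊢
  intro a b c ha hb hc hab hbc hac
  by_cases hbN : b ∈ G.closedNbhd v
  · have haN := hX.mem_closedNbhd_of_adj hbN (hTX hb) (hTX ha) hab.symm
    have hcN := hX.mem_closedNbhd_of_adj hbN (hTX hb) (hTX hc) hbc
    exact hX.isClique_closedNbhd_inter ⟨haN, hTX ha⟩ ⟨hcN, hTX hc⟩ hac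
  -- `b ∉ N[v]`, so neither `b` nor its neighbours are twins of `v`; hence they avoid `S`
  have hnotS : ∀ {x}, x ∉ (S ∪ X) \ Twins G v → (x = b ∨ G.Adj x b) → x ∉ S := by
    rintro x hx hxb
    refine ((hout hx).resolve_left fun hxT => hbN ?_).1
    rcases hxb with rfl | hxb
    · exact mem_closedNbhd_of_mem_twins hxT
    · exact mem_closedNbhd_of_mem_twins_of_adj hxT hxb
  exact hS a b c (hnotS ha (.inr hab)) (hnotS hb (.inl rfl)) (hnotS hc (.inr hbc.symm))
    hab hbc hac

lemma ncard_union_diff_le [Finite V] {T : Set V} (hTS : T ⊆ S) (hXT : (X \ S).ncard ≤ T.ncard) :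
    ((S ∪ X) \ T).ncard ≤ S.ncard := by
  rw [Set.ncard_sdiff (hTS.trans Set.subset_union_left), ← Set.union_sdiff_self,
    Set.ncard_union_eq Set.disjoint_sdiff_right]
  omega

end

/-- For any vertex cover `X` of `H_v` there is a minimum cluster deletion set `S`
with `v ∉ S` or `|X \ S| ≥ 1 + |Twins(v)|`. -/
theorem stmt7 {V : Type*} [Fintype V] (G : SimpleGraph V) (v : V) (X : Set V)
    (hX : IsVC (Hv G v) X) :
    ∃ S : Set V, IsCDS G S ∧ (∀ T : Set V, IsCDS G T → S.ncard ≤ T.ncard) ∧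
      (v ∉ S ∨ 1 + (Twins G v).ncard ≤ (X \ S).ncard) := by
  classical
  obtain ⟨S, hS, hmin⟩ := exists_isCDS_forall_ncard_le G
  by_cases hvS : v ∉ S
  · exact ⟨S, hS, hmin, .inl hvS⟩
  by_cases hTS : ∃ v' ∈ Twins G v, v' ∉ S
  · obtain ⟨v', hv', hv'S⟩ := hTS
    refine ⟨twinSwap hv' ⁻¹' S, hS.preimage _, fun T hT => ?_, .inl ?_⟩
    · rw [Set.ncard_preimage_of_injective_subset_range (twinSwap hv').injective (by simp)]
      exact hmin T hT
    · simpa [twinSwap] using hv'S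
  by_cases hXS : 1 + (Twins G v).ncard ≤ (X \ S).ncard
  · exact ⟨S, hS, hmin, .inr hXS⟩
  push Not at hTS hXS
  refine ⟨(S ∪ X) \ Twins G v, hS.union_diff_twins hX,
    fun T hT => (ncard_union_diff_le hTS (by omega)).trans (hmin T hT), .inl ?_⟩
  exact fun hv => hv.2 mem_twins_self
end

section
/- If H is a graph with vc(H) = 2 and u is a vertex of degree 3 such that H − u also contains a vertex u' of degree 3, then H − u consists of a 3-star centered at u' (possibly together with isolated vertices). -/
/-!
A vertex outside a vertex cover `X` has its whole neighbourhood inside `X`, so every vertex of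
degree greater than `|X|` lies in `X`. A minimum vertex cover `X` of `H` (of size 2) is also a
cover of `H − u`, so it contains both `u` and `u'`, hence `X = {u, u'}`, and every edge of `H − u`
must meet `u'`.
-/

theorem delVert_adj {V : Type*} {H : SimpleGraph V} {u a b : V} :
    (delVert H u).Adj a b ↔ H.Adj a b ∧ a ≠ u ∧ b ≠ u := by
  simp only [delVert, SimpleGraph.fromRel_adj]
  constructor
  · rintro ⟨-, ⟨hab, ha, hb⟩ | ⟨hba, hb, ha⟩⟩
    exacts [⟨hab, ha, hb⟩, ⟨hba.symm, ha, hb⟩]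
  · rintro ⟨hab, ha, hb⟩
    exact ⟨hab.ne, Or.inl ⟨hab, ha, hb⟩⟩

theorem delVert_le {V : Type*} (H : SimpleGraph V) (u : V) : delVert H u ≤ H :=
  fun _ _ h => (delVert_adj.1 h).1

theorem delVert_neighborSet_self {V : Type*} (H : SimpleGraph V) (u : V) :
    (delVert H u).neighborSet u = ∅ :=
  Set.eq_empty_of_forall_notMem fun _ h => (delVert_adj.1 h).2.1 rfl

theorem exists_isVC_ncard_eq_sInf {V : Type*} (H : SimpleGraph V) :
    ∃ X : Set V, IsVC H X ∧ X.ncard = sInf {n : ℕ | ∃ X : Set V, IsVC H X ∧ X.ncard = n} :=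
  Nat.sInf_mem (s := {n : ℕ | ∃ X : Set V, IsVC H X ∧ X.ncard = n})
    ⟨Set.univ.ncard, Set.univ, fun _ _ _ => Or.inl (Set.mem_univ _), rfl⟩

namespace IsVC

variable {V : Type*} {G H : SimpleGraph V} {X : Set V}

theorem mono (hX : IsVC H X) (hGH : G ≤ H) : IsVC G X :=
  fun a b hab => hX a b (hGH hab)

theorem mem_of_ncard_lt (hX : IsVC H X) (hfin : X.Finite) {v : V}
    (hv : X.ncard < (H.neighborSet v).ncard) : v ∈ X := by
  by_contra hvX
  have hN : H.neighborSet v ⊆ X := fun w hw => (hX v w hw).resolve_left hvX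
  exact (Set.ncard_le_ncard hN hfin).not_gt hv

end IsVC

theorem stmt16_general {V : Type*} (H : SimpleGraph V) (u u' : V)
    (hvc : sInf {n : ℕ | ∃ X : Set V, IsVC H X ∧ X.ncard = n} = 2)
    (hd : (H.neighborSet u).ncard = 3)
    (hd' : ((delVert H u).neighborSet u').ncard = 3) :
    ∀ x y : V, (delVert H u).Adj x y → x = u' ∨ y = u' := by
  obtain ⟨X, hX, hX2⟩ := exists_isVC_ncard_eq_sInf H
  rw [hvc] at hX2
  have hfin : X.Finite := Set.finite_of_ncard_ne_zero (by omega)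
  have hu : u ∈ X := hX.mem_of_ncard_lt hfin (by omega)
  have hu' : u' ∈ X := (hX.mono (delVert_le H u)).mem_of_ncard_lt hfin (by omega)
  have hne : u ≠ u' := by
    rintro rfl
    simp [delVert_neighborSet_self] at hd'
  have hXeq : X = {u, u'} :=
    (Set.eq_of_subset_of_ncard_le (Set.pair_subset hu hu')
      (by rw [Set.ncard_pair hne, hX2]) hfin).symm
  intro x y hxy
  obtain ⟨hxy, hx, hy⟩ := delVert_adj.1 hxy
  rcases hX x y hxy with h | h
  · exact Or.inl (by simpa [hXeq, hx] using h)
  · exact Or.inr (by simpa [hXeq, hy] using h)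

/-- If `vc(H) = 2`, `u` has degree 3 in `H`, and `u' ≠ u` has degree 3 in `H − u`,
then `H − u` consists of a 3-star centered at `u'` (plus isolated vertices), i.e.
every edge of `H − u` is incident to `u'`. -/
theorem stmt16 {V : Type*} [Fintype V] (H : SimpleGraph V) (u u' : V)
    (hne : u' ≠ u)
    (hvc : sInf {n : ℕ | ∃ X : Set V, IsVC H X ∧ X.ncard = n} = 2)
    (hd : (H.neighborSet u).ncard = 3)
    (hd' : ((delVert H u).neighborSet u').ncard = 3) :
    ∀ x y : V, (delVert H u).Adj x y → x = u' ∨ y = u' :=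
  stmt16_general H u u' hvc hd hd'
end
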